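/- arXiv:2203.14058 — 4 statements merged into one kernel-verified Lean document; each statement's English description precedes it below -/
import Mathlib

section
/- Suppose a bag of clients is processed over an ordered list of facilities y₁, …, y_l, where at step l' the bag gains at most β·U_{y_{l'}} new clients (β ≥ 1), and the bag is emptied whenever it contains at least L_{y_{l'}} clients. If either L or U is uniform and L_t ≤ U_t for all t, then at every step the number of clients in the bag just after adding new clients is at most (β+1)·U_{y_{l'}}. -/
theorem lower_le_upper_of_uniform {l : ℕ} {L U : ℕ → ℝ} (hLU : ∀ t < l, L t ≤ U t)
    (huni : (∀ a < l, ∀ b < l, L a = L b) ∨ (∀ a < l, ∀ b < l, U a = U b))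
    {a b : ℕ} (ha : a < l) (hb : b < l) : L a ≤ U b := by
  rcases huni with hL | hU
  · exact hL a ha b hb ▸ hLU b hb
  · exact hU a ha b hb ▸ hLU a ha

theorem stmt_9_general (l : ℕ) (L U N bagBefore : ℕ → ℝ) (β : ℝ)
    (hL0 : ∀ t < l, 0 ≤ L t)
    (hLU : ∀ t < l, L t ≤ U t)
    (huni : (∀ a < l, ∀ b < l, L a = L b) ∨ (∀ a < l, ∀ b < l, U a = U b))
    (hN : ∀ t < l, N t ≤ β * U t)
    (hbag0 : bagBefore 0 = 0)
    (hbag : ∀ t, 1 ≤ t → t < l → bagBefore t < L (t - 1)) :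
    ∀ t < l, bagBefore t + N t ≤ (β + 1) * U t := by
  intro t ht
  have hNt := hN t ht
  cases t with
  | zero =>
    have hU0 : 0 ≤ U 0 := (hL0 0 ht).trans (hLU 0 ht)
    linarith
  | succ s =>
    have hprev : L s ≤ U (s + 1) :=
      lower_le_upper_of_uniform hLU huni (Nat.lt_of_succ_lt ht) ht
    have hb := hbag (s + 1) (Nat.succ_pos s) ht
    simp only [Nat.add_sub_cancel] at hb
    linarith

/-- Bag invariant: clients are processed over facilities `y_0, …, y_{l-1}` with lower
bounds `L` and upper bounds `U`, `L ≤ U` pointwise and one of the bounds uniform.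
At step `t` the bag gains `N t ≤ β·U t` new clients (`β ≥ 1`); the bag starts empty
and, since the bag is emptied whenever it reaches the current lower bound, just before
step `t ≥ 1` it holds fewer than `L (t-1)` clients. Then just after adding, the bag
holds at most `(β + 1)·U t` clients. -/
theorem stmt_9 (l : ℕ) (L U N bagBefore : ℕ → ℝ) (β : ℝ) (hβ : 1 ≤ β)
    (hL0 : ∀ t < l, 0 ≤ L t)
    (hLU : ∀ t < l, L t ≤ U t)
    (huni : (∀ a < l, ∀ b < l, L a = L b) ∨ (∀ a < l, ∀ b < l, U a = U b))
    (hN0 : ∀ t < l, 0 ≤ N t)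
    (hN : ∀ t < l, N t ≤ β * U t)
    (hbag0 : bagBefore 0 = 0)
    (hbag : ∀ t, 1 ≤ t → t < l → bagBefore t < L (t - 1)) :
    ∀ t < l, bagBefore t + N t ≤ (β + 1) * U t :=
  stmt_9_general l L U N bagBefore β hL0 hLU huni hN hbag0 hbag
end

section
/- In the star-processing algorithm, the number of facilities opened while processing a star S_i with leaves η⁻¹(i) = {y₁, …, y_l} is at most l = |η⁻¹(i)|. Consequently, if the second solution opens at most k facilities in total (Σ_i |η⁻¹(i)| ≤ k), the combined solution opens at most k facilities. -/
/-! Within a star, the opened facilities lie among the center and the leaves but miss the center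
or the last leaf, so they form a proper subset of `insert center leaves` and number at most
`|leaves|`. Summing over the stars gives the global bound. -/

namespace Finset

variable {α : Type*} [DecidableEq α]

theorem card_le_of_subset_insert_of_not_both {s t : Finset α} {a b : α} (hb : b ∈ s)
    (hts : t ⊆ insert a s) (hab : ¬ (a ∈ t ∧ b ∈ t)) : #t ≤ #s := by
  have hmiss : ∃ x ∈ insert a s, x ∉ t := by
    by_cases ha : a ∈ t
    · exact ⟨b, mem_insert_of_mem hb, fun hbt => hab ⟨ha, hbt⟩⟩
    · exact ⟨a, mem_insert_self a s, ha⟩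
  have hlt : #t < #(insert a s) := card_lt_card ((ssubset_iff_of_subset hts).2 hmiss)
  have := card_insert_le a s
  omega

end Finset

theorem stmt_11_general {I F : Type*} [Fintype I] [DecidableEq F]
    (center : I → F) (leaves : I → Finset F) (lastLeaf : I → F)
    (opened : I → Finset F) (k : ℕ)
    (hlast : ∀ i, lastLeaf i ∈ leaves i)
    (hsub : ∀ i, opened i ⊆ insert (center i) (leaves i))
    (honeOf : ∀ i, ¬ (center i ∈ opened i ∧ lastLeaf i ∈ opened i)) :
    (∀ i : I, (opened i).card ≤ (leaves i).card) ∧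
      ((∑ i : I, (leaves i).card) ≤ k → (∑ i : I, (opened i).card) ≤ k) := by
  have hstar : ∀ i, (opened i).card ≤ (leaves i).card := fun i =>
    Finset.card_le_of_subset_insert_of_not_both (hlast i) (hsub i) (honeOf i)
  exact ⟨hstar, (Finset.sum_le_sum fun i _ => hstar i).trans⟩

/-- While processing a star, facilities opened among the leaves `y_1, …, y_{l-1}` together
with exactly one of the star center `i` and the last leaf `y_l` number at most
`l = |η⁻¹(i)|`; summing over all stars, if the second solution opens at most `k`
facilities in total then the combined solution opens at most `k` facilities. -/
theorem stmt_11 {I F : Type*} [Fintype I] [DecidableEq F]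
    (center : I → F) (leaves : I → Finset F) (lastLeaf : I → F)
    (opened : I → Finset F) (k : ℕ)
    (hlast : ∀ i, lastLeaf i ∈ leaves i)
    (hcenter : ∀ i, center i ∉ leaves i)
    (hsub : ∀ i, opened i ⊆ insert (center i) (leaves i))
    (honeOf : ∀ i, ¬ (center i ∈ opened i ∧ lastLeaf i ∈ opened i)) :
    (∀ i : I, (opened i).card ≤ (leaves i).card) ∧
      ((∑ i : I, (leaves i).card) ≤ k → (∑ i : I, (opened i).card) ≤ k) :=
  stmt_11_general center leaves lastLeaf opened k hlast hsub honeOf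
end

section
/- If at the moment star S_i is processed, no client of σ̂₁⁻¹(i) has been settled by any earlier-processed star (which holds because the dependency graph restricted to non-loop edges has no edge from S_i to any earlier star in the topological order, and distinct centers have disjoint σ̂₁-fibers), then at least L_i clients of σ̂₁⁻¹(i) are available, i.e., |σ̂₁⁻¹(i) \ Settled| ≥ L_i. -/
/-- Availability of reserved clients: if the stars processed earlier (centered at the
facilities in `B`) settle only clients whose `σ̂₁`-facility lies in `B` or whose
`σ₂`-facility belongs to a star of `B`, the dependency graph has no edge from `S_i`
to an earlier star (no client of `σ̂₁⁻¹(i)` is `σ₂`-assigned to a leaf of a star in `B`),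
and `i ∉ B`, then all of `σ̂₁⁻¹(i)` is still unsettled, so at least `L i` clients of
`σ̂₁⁻¹(i)` are available. -/
theorem stmt_15 {C F₁ F₂ : Type*} [Fintype C] [DecidableEq C] [DecidableEq F₁]
    (σh : C → F₁) (σ₂ : C → F₂) (η : F₂ → F₁) (L : F₁ → ℕ)
    (hfib : ∀ i : F₁, L i ≤ (Finset.univ.filter (fun j => σh j = i)).card)
    (B : Finset F₁) (i : F₁) (hi : i ∉ B)
    (Settled : Finset C)
    (hSettled : ∀ j ∈ Settled, σh j ∈ B ∨ η (σ₂ j) ∈ B)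
    (hnoedge : ∀ j : C, σh j = i → η (σ₂ j) ∉ B) :
    L i ≤ ((Finset.univ.filter (fun j => σh j = i)) \ Settled).card := by
  have hfiber_unsettled : Disjoint (Finset.univ.filter (fun j => σh j = i)) Settled := by
    refine Finset.disjoint_left.2 fun j hj hjSettled => ?_
    have hji : σh j = i := (Finset.mem_filter.1 hj).2
    rcases hSettled j hjSettled with hcenter | hleaf
    · exact hi (hji ▸ hcenter)
    · exact hnoedge j hji hleaf
  rw [Finset.sdiff_eq_self_of_disjoint hfiber_unsettled]
  exact hfib i
end

section
/- Let β ≥ 0 and suppose either all lower bounds or all upper bounds are uniform with L_t ≤ U_t for all t. If the final group satisfies |Bag ∪ N_{y_l} ∪ Res(i)| > (β+1)·U_i, then Res(i) = ∅; equivalently, if Res(i) ≠ ∅ then |Bag ∪ N_{y_l} ∪ Res(i)| ≤ 2·U_i ≤ (β+1)·U_i when β ≥ 1. -/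
/-! If `Res ≠ ∅` then `|N ∪ Res| = L i ≤ U i`, and since one of the bounds is uniform,
`|Bag| < L prev ≤ U i`; so the final group has at most `2 · U i ≤ (β + 1) · U i` clients. -/

theorem lower_le_upper_of_uniform_s17 {F : Type*} {L U : F → ℕ} (hLU : ∀ t, L t ≤ U t)
    (huni : (∀ r s : F, L r = L s) ∨ (∀ r s : F, U r = U s)) (s t : F) : L s ≤ U t := by
  rcases huni with hL | hU
  · exact hL s t ▸ hLU t
  · exact hU s t ▸ hLU s

theorem card_union_le_two_mul {C : Type*} [DecidableEq C] {A B : Finset C} {u : ℕ}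
    (hA : A.card ≤ u) (hB : B.card ≤ u) : (A ∪ B).card ≤ 2 * u := by
  have := Finset.card_union_le A B
  omega

theorem stmt_17_general {C F : Type*} [DecidableEq C]
    (L U : F → ℕ) (hLU : ∀ t : F, L t ≤ U t)
    (huni : (∀ r s : F, L r = L s) ∨ (∀ r s : F, U r = U s))
    (β : ℝ) (hβ : 1 ≤ β)
    (i prev : F) (Bag N Res : Finset C)
    (hRes : Res.Nonempty → (N ∪ Res).card = L i)
    (hBag : Bag.card < L prev ∨ Bag.card = 0) :
    (β + 1) * (U i : ℝ) < ((Bag ∪ N ∪ Res).card : ℝ) → Res = ∅ := by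
  intro hcard
  by_contra hne
  have hNRes : (N ∪ Res).card ≤ U i :=
    (hRes (Finset.nonempty_iff_ne_empty.mpr hne)).trans_le (hLU i)
  have hBagU : Bag.card ≤ U i := by
    rcases hBag with h | h
    · exact h.le.trans (lower_le_upper_of_uniform_s17 hLU huni prev i)
    · exact h ▸ Nat.zero_le _
  have hgroup : ((Bag ∪ N ∪ Res).card : ℝ) ≤ 2 * U i := by
    rw [Finset.union_assoc]
    exact_mod_cast card_union_le_two_mul hBagU hNRes
  nlinarith [(U i).cast_nonneg (α := ℝ)]

/-- With one of the bounds uniform, `L ≤ U` pointwise and `β ≥ 1`: if the final group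
`Bag ∪ N ∪ Res` has more than `(β+1)·U i` clients then no client was reserved
(`Res = ∅`). Here `Res ≠ ∅` forces `|N ∪ Res| = L i`, and the bag satisfies
`|Bag| < L prev` or `|Bag| = 0`. -/
theorem stmt_17 {C F : Type*} [DecidableEq C]
    (L U : F → ℕ) (hLU : ∀ t : F, L t ≤ U t)
    (huni : (∀ r s : F, L r = L s) ∨ (∀ r s : F, U r = U s))
    (β : ℝ) (hβ : 1 ≤ β)
    (i prev : F) (Bag N Res : Finset C)
    (hBN : Disjoint Bag N) (hBR : Disjoint Bag Res) (hNR : Disjoint N Res)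
    (hRes : Res.Nonempty → (N ∪ Res).card = L i)
    (hBag : Bag.card < L prev ∨ Bag.card = 0) :
    (β + 1) * (U i : ℝ) < ((Bag ∪ N ∪ Res).card : ℝ) → Res = ∅ :=
  stmt_17_general L U hLU huni β hβ i prev Bag N Res hRes hBag
end
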